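/- arXiv:2510.08533 — 2 statements merged into one kernel-verified Lean document; each statement's English description precedes it below -/
import Mathlib

section
/- Let ρ be a positive-definite density matrix and A any square complex matrix of the same size, and define the superoperator K_A by K_A[X] = [A,X]·(ρ^{1/2} A† ρ^{−1/2}) − (ρ^{−1/2} A† ρ^{1/2})·[A,X]. Then for all matrices X and Y: ⟨Y, −K_A[X]⟩_ρ = ⟨[A,Y], [A,X]⟩_ρ; in particular, ⟨X, −K_A[X]⟩_ρ = ‖[A,X]‖_ρ². -/
open scoped BigOperators
open MeasureTheory
open scoped ComplexOrder

noncomputable section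

/-- Configuration space of a chain of `n` sites, each consisting of `q` qubits
(local dimension `2^q`). -/
abbrev SpinIdx (n q : ℕ) : Type := Fin n → Fin q → Fin 2

/-- Matrices (linear operators) on the chain Hilbert space `(ℂ^{2^q})^{⊗ n}`. -/
abbrev Mat (n q : ℕ) : Type := Matrix (SpinIdx n q) (SpinIdx n q) ℂ

/-- Operator norm (largest singular value) of a complex matrix. -/
def opNorm {m : Type*} [Fintype m] [DecidableEq m] (M : Matrix m m ℂ) : ℝ :=
  ‖LinearMap.toContinuousLinearMap (Matrix.toEuclideanLin M)‖

/-- Matrix exponential. -/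
def mexp {m : Type*} [Fintype m] [DecidableEq m] (M : Matrix m m ℂ) : Matrix m m ℂ :=
  NormedSpace.exp M

open Classical in
/-- The positive semidefinite square root of a matrix (junk value `0` if the matrix is
not positive semidefinite). -/
def msqrt {m : Type*} [Fintype m] [DecidableEq m] (ρ : Matrix m m ℂ) : Matrix m m ℂ :=
  if h : ρ.PosSemidef then
    h.1.eigenvectorUnitary.1 * Matrix.diagonal ((↑) ∘ Real.sqrt ∘ h.1.eigenvalues) *
      (star h.1.eigenvectorUnitary : Matrix m m ℂ)
  else 0

/-- KMS inner product `⟨X,Y⟩_ρ = Tr[X† ρ^{1/2} Y ρ^{1/2}]`. -/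
def kmsInner {m : Type*} [Fintype m] [DecidableEq m] (ρ X Y : Matrix m m ℂ) : ℂ :=
  (X.conjTranspose * msqrt ρ * Y * msqrt ρ).trace

/-- Squared KMS norm `‖X‖_ρ²`. -/
def kmsNormSq {m : Type*} [Fintype m] [DecidableEq m] (ρ X : Matrix m m ℂ) : ℝ :=
  (kmsInner ρ X X).re

/-- KMS norm `‖X‖_ρ`. -/
def kmsNorm {m : Type*} [Fintype m] [DecidableEq m] (ρ X : Matrix m m ℂ) : ℝ :=
  Real.sqrt (kmsNormSq ρ X)

/-- Commutator `[A,B] = AB - BA`. -/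
def mComm {m : Type*} [Fintype m] (A B : Matrix m m ℂ) : Matrix m m ℂ :=
  A * B - B * A

/-- The four Pauli matrices `I, X, Y, Z`. -/
def pauli : Fin 4 → Matrix (Fin 2) (Fin 2) ℂ :=
  ![1, !![0, 1; 1, 0], !![0, -Complex.I; Complex.I, 0], !![1, 0; 0, -1]]

/-- The single-site Pauli jump operator at site `i` given by the Pauli word `p`:
it acts as `⊗_{k<q} pauli (p k)` on the `i`-th site and as the identity elsewhere. -/
def pauliOp (n q : ℕ) (i : Fin n) (p : Fin q → Fin 4) : Mat n q :=
  Matrix.of fun a b =>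
    (∏ k : Fin q, pauli (p k) (a i k) (b i k)) *
      (if Function.update a i (b i) = b then 1 else 0)

/-- `X` is supported on the set `S` of sites: it acts as the identity on all tensor
factors outside `S` (i.e. `X = X_S ⊗ I_{S^c}`), stated entrywise. -/
def SupportedOn {n q : ℕ} (S : Set (Fin n)) (X : Mat n q) : Prop :=
  (∀ a b a' b' : SpinIdx n q,
      (∀ i ∈ S, a i = a' i) → (∀ i ∈ S, b i = b' i) →
      (∀ i ∉ S, a i = b i) → (∀ i ∉ S, a' i = b' i) →
      X a b = X a' b') ∧
  ∀ a b : SpinIdx n q, (∃ i ∉ S, a i ≠ b i) → X a b = 0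

/-- `h` is a family of nearest-neighbour terms of a 1D Hamiltonian: each `h b` is Hermitian, has
operator norm at most 1, is supported on the sites `{b, b+1}`, and the (nonexistent) last
link is zero. -/
def IsOneDimTerms (n q : ℕ) (h : Fin n → Mat n q) : Prop :=
  (∀ b, (h b).IsHermitian) ∧
  (∀ b, opNorm (h b) ≤ 1) ∧
  (∀ b : Fin n, SupportedOn {i : Fin n | (i : ℕ) = (b : ℕ) ∨ (i : ℕ) = (b : ℕ) + 1} (h b)) ∧
  ∀ b : Fin n, (b : ℕ) + 1 = n → h b = 0

/-- `H` is a 1D Hamiltonian with nearest-neighbour interactions of strength at most 1. -/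
def IsOneDimHamiltonian (n q : ℕ) (H : Mat n q) : Prop :=
  ∃ h : Fin n → Mat n q, IsOneDimTerms n q h ∧ H = ∑ b, h b

/-- The Gibbs state `e^{-βH}/Tr[e^{-βH}]`. -/
def gibbs {m : Type*} [Fintype m] [DecidableEq m] (β : ℝ) (H : Matrix m m ℂ) : Matrix m m ℂ :=
  ((mexp ((-β : ℂ) • H)).trace)⁻¹ • mexp ((-β : ℂ) • H)

/-- Lattice distance between two subsets of the chain. -/
def chainDist {n : ℕ} (A C : Finset (Fin n)) : ℕ :=
  sInf {d : ℕ | ∃ i ∈ A, ∃ j ∈ C, d = ((i : ℤ) - (j : ℤ)).natAbs}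

/-- A contiguous set of sites. -/
def IsChainInterval {n : ℕ} (A : Finset (Fin n)) : Prop :=
  ∀ i ∈ A, ∀ k ∈ A, ∀ j : Fin n, i ≤ j → j ≤ k → j ∈ A

/-- The interval of sites `[s, t)` of the chain. -/
def chainInterval (n s t : ℕ) : Finset (Fin n) :=
  Finset.univ.filter fun i => s ≤ (i : ℕ) ∧ (i : ℕ) < t

/-- Entrywise (Bochner) integral of a matrix-valued function on `ℝ`. -/
def mIntegral {m : Type*} [Fintype m] (F : ℝ → Matrix m m ℂ) : Matrix m m ℂ :=
  Matrix.of fun i j => ∫ t : ℝ, F t i j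

/-- Heisenberg evolution `e^{iHt} A e^{-iHt}`. -/
def heis {m : Type*} [Fintype m] [DecidableEq m] (H : Matrix m m ℂ) (t : ℝ)
    (A : Matrix m m ℂ) : Matrix m m ℂ :=
  mexp ((Complex.I * (t : ℂ)) • H) * A * mexp ((-(Complex.I * (t : ℂ))) • H)

/-- Gaussian filter function `f_σ(t) = e^{-σ²t²} (σ √(2/π))^{1/2}`. -/
def fGauss (σ t : ℝ) : ℝ :=
  Real.exp (-(σ ^ 2 * t ^ 2)) * Real.sqrt (σ * Real.sqrt (2 / Real.pi))

/-- Operator Fourier transform `Â_σ(ω) = (2π)^{-1/2} ∫ e^{iHt} A e^{-iHt} e^{-iωt} f_σ(t) dt`. -/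
def oft {m : Type*} [Fintype m] [DecidableEq m] (σ : ℝ) (H A : Matrix m m ℂ) (ω : ℝ) :
    Matrix m m ℂ :=
  ((Real.sqrt (2 * Real.pi) : ℂ))⁻¹ •
    mIntegral fun t => ((fGauss σ t : ℂ) * Complex.exp (-(Complex.I * (ω : ℂ) * (t : ℂ)))) • heis H t A

/-- Time-evolved operator Fourier transform `Â_σ(ω,t) = e^{iHt} Â_σ(ω) e^{-iHt}`. -/
def oftT {m : Type*} [Fintype m] [DecidableEq m] (σ : ℝ) (H A : Matrix m m ℂ) (ω t : ℝ) :
    Matrix m m ℂ :=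
  heis H t (oft σ H A ω)

/-- The time weight `g(t) = 1/(β cosh(2πt/β))`. -/
def gWeight (β t : ℝ) : ℝ := (β * Real.cosh (2 * Real.pi * t / β))⁻¹

/-- The Gaussian frequency filter `h_G(ω) = e^{-1/4} e^{-ω²β²/2}`. -/
def hGaussW (β ω : ℝ) : ℝ := Real.exp (-(1 / 4 : ℝ)) * Real.exp (-(ω ^ 2 * β ^ 2) / 2)

/-- The Dirichlet form `⟨O, -L†[O]⟩_ρ` of the exactly detailed-balanced Lindbladian with all
single-site Pauli jumps, Gaussian weight, and energy width `σ = 1/β`. -/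
def dirichletL (n q : ℕ) (β : ℝ) (H ρ O : Mat n q) : ℝ :=
  ∑ i : Fin n, ∑ p : Fin q → Fin 4,
    ∫ ω : ℝ, ∫ t : ℝ,
      gWeight β t * hGaussW β ω *
        kmsNormSq ρ (mComm (oftT (1 / β) H (pauliOp n q i p) ω t) O)

/-- The Dirichlet form `Σ_a ‖[A^a, O]‖_ρ²` of the generator `K` with all single-site
Pauli jumps. -/
def dirichletK (n q : ℕ) (ρ O : Mat n q) : ℝ :=
  ∑ i : Fin n, ∑ p : Fin q → Fin 4, kmsNormSq ρ (mComm (pauliOp n q i p) O)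

/-- `E` is the KMS-orthogonal projection (w.r.t. the state `ρ`) onto the subspace of operators
supported on the complement of `R`: the spectral conditional expectation `Ẽ_R`. -/
def IsKMSProjOnto {n q : ℕ} (ρ : Mat n q) (R : Set (Fin n)) (E : Mat n q → Mat n q) : Prop :=
  (∀ O, SupportedOn Rᶜ (E O)) ∧
  ∀ O Z, SupportedOn Rᶜ Z → kmsInner ρ Z (O - E O) = 0


/-- The auxiliary generator
`K_A[X] = [A,X]·(ρ^{1/2} A† ρ^{-1/2}) - (ρ^{-1/2} A† ρ^{1/2})·[A,X]`. -/
def Ksuper {m : Type*} [Fintype m] [DecidableEq m] (ρ A X : Matrix m m ℂ) : Matrix m m ℂ :=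
  mComm A X * (msqrt ρ * A.conjTranspose * (msqrt ρ)⁻¹)
    - ((msqrt ρ)⁻¹ * A.conjTranspose * msqrt ρ) * mComm A X

lemma msqrt_isUnit_det {m : Type*} [Fintype m] [DecidableEq m]
    {ρ : Matrix m m ℂ} (hρ : ρ.PosDef) : IsUnit (msqrt ρ).det := by
  rw [msqrt, dif_pos hρ.posSemidef]
  refine isUnit_iff_ne_zero.mpr ?_
  rw [Matrix.det_mul, Matrix.det_mul, mul_right_comm, ← Matrix.det_mul, Matrix.det_diagonal]
  have hU := (hρ.posSemidef.1.eigenvectorUnitary).2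
  rw [Unitary.mul_star_self_of_mem hU, Matrix.det_one, one_mul]
  refine Finset.prod_ne_zero_iff.mpr fun i _ => ?_
  have := hρ.eigenvalues_pos i
  simp only [Function.comp_apply, ne_eq, Complex.ofReal_eq_zero]
  exact (Real.sqrt_pos.mpr this).ne'

lemma msqrt_hermitian {m : Type*} [Fintype m] [DecidableEq m]
    {ρ : Matrix m m ℂ} (hρ : ρ.PosDef) : (msqrt ρ).conjTranspose = msqrt ρ := by
  rw [msqrt, dif_pos hρ.posSemidef]
  simp only [Matrix.conjTranspose_mul, Matrix.diagonal_conjTranspose, Matrix.star_eq_conjTranspose,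
    Matrix.conjTranspose_conjTranspose, mul_assoc]
  congr 3
  funext i
  simp

set_option maxHeartbeats 1000000 in
/-- the Dirichlet form of `K`: for a positive-definite density matrix `ρ`
and any matrix `A`, the generator `K_A` satisfies
`⟨Y, -K_A[X]⟩_ρ = ⟨[A,Y], [A,X]⟩_ρ` for all `X, Y`; in particular
`⟨X, -K_A[X]⟩_ρ = ‖[A,X]‖_ρ²`. -/
theorem dirichlet_form_of_K {m : Type*} [Fintype m] [DecidableEq m]
    (ρ : Matrix m m ℂ) (hρ : ρ.PosDef) (hρtr : ρ.trace = 1) (A : Matrix m m ℂ) :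
    (∀ X Y : Matrix m m ℂ,
        kmsInner ρ Y (-(Ksuper ρ A X)) = kmsInner ρ (mComm A Y) (mComm A X)) ∧
    ∀ X : Matrix m m ℂ,
        kmsInner ρ X (-(Ksuper ρ A X)) = ((kmsNormSq ρ (mComm A X) : ℝ) : ℂ) := by
  set s := msqrt ρ with hs
  have hdet := msqrt_isUnit_det hρ
  have hinv1 : s * s⁻¹ = 1 := Matrix.mul_nonsing_inv _ hdet
  have hinv2 : s⁻¹ * s = 1 := Matrix.nonsing_inv_mul _ hdet
  have cancel1 : ∀ Z : Matrix m m ℂ, s * (s⁻¹ * Z) = Z := by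
    intro Z; rw [← mul_assoc, hinv1, one_mul]
  have key : ∀ X Y : Matrix m m ℂ,
      kmsInner ρ Y (-(Ksuper ρ A X)) = kmsInner ρ (mComm A Y) (mComm A X) := by
    intro X Y
    set C := mComm A X with hC
    have lhs_eq : kmsInner ρ Y (-(Ksuper ρ A X))
        = (Y.conjTranspose * (A.conjTranspose * (s * (C * s)))).trace
          - (Y.conjTranspose * (s * (C * (s * A.conjTranspose)))).trace := by
      simp only [kmsInner, Ksuper, ← hC, ← hs, neg_sub, sub_mul, mul_sub,
        Matrix.trace_sub, mul_assoc, cancel1, hinv2, mul_one]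
    have rhs_eq : kmsInner ρ (mComm A Y) C
        = (Y.conjTranspose * (A.conjTranspose * (s * (C * s)))).trace
          - (A.conjTranspose * (Y.conjTranspose * (s * (C * s)))).trace := by
      simp only [kmsInner, ← hs, mComm, Matrix.conjTranspose_sub,
        Matrix.conjTranspose_mul, sub_mul, Matrix.trace_sub, mul_assoc]
    have cyc : (A.conjTranspose * (Y.conjTranspose * (s * (C * s)))).trace
        = (Y.conjTranspose * (s * (C * (s * A.conjTranspose)))).trace := by
      rw [Matrix.trace_mul_comm]
      simp only [mul_assoc]
    rw [lhs_eq, rhs_eq, cyc]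
  refine ⟨key, fun X => ?_⟩
  rw [key X X]
  set Z := mComm A X with hZ
  have hconj : starRingEnd ℂ (kmsInner ρ Z Z) = kmsInner ρ Z Z := by
    rw [kmsInner, ← hs]
    rw [show starRingEnd ℂ (Z.conjTranspose * s * Z * s).trace
        = ((Z.conjTranspose * s * Z * s).conjTranspose).trace from
      (Matrix.trace_conjTranspose _).symm]
    simp only [Matrix.conjTranspose_mul, Matrix.conjTranspose_conjTranspose,
      msqrt_hermitian hρ, ← hs]
    rw [show s.conjTranspose = s from msqrt_hermitian hρ]
    rw [show s * (Z.conjTranspose * (s * Z)) = s * ((Z.conjTranspose * (s * Z)))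
        from rfl, Matrix.trace_mul_comm]
    simp only [mul_assoc]
  have hreal : (kmsInner ρ Z Z).im = 0 := Complex.conj_eq_iff_im.mp hconj
  rw [kmsNormSq]
  exact (Complex.ext_iff.mpr ⟨by simp, by simp [hreal]⟩).symm

end
end

section
/- Let V be a finite-dimensional complex inner product space, and let P₀, P₁, P₂ be orthogonal projections on V with P₀P₁ = P₀ and P₀P₂ = P₀ (consistency: the range of P₀ is contained in the ranges of P₁ and P₂). Let O ∈ V and ε ∈ [0, 1/2) satisfy Re⟨(1 − P₀)P₁O, (1 − P₀)P₂O⟩ ≤ ε·‖(1 − P₀)O‖². Then ‖(1 − P₀)O‖² ≤ (1 − 2ε)^{−1}·( ‖(1 − P₁)O‖² + ‖(1 − P₂)O‖² ). (Factorization of variance: in the paper, V is the space of matrices with the KMS inner product ⟨X,Y⟩_ρ, P₀ = Ẽ_{ABC}, P₁ = Ẽ_{AB}, P₂ = Ẽ_{BC} are the spectral conditional expectations, the left-hand side of the hypothesis is the conditional covariance Cov_{ABC}(Ẽ_{AB}[O], Ẽ_{BC}[O]), and the conclusion reads Var_{ABC}(O) ≤ (1−2ε)^{−1}(Var_{AB}(O)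 + Var_{BC}(O)).) -/
noncomputable section

/-- factorization of variance: let `V` be a finite-dimensional complex
inner ℂ product space and `P₀, P₁, P₂` orthogonal projections (self-adjoint idempotents) with
`P₀P₁ = P₀` and `P₀P₂ = P₀`. If `O ∈ V` and `ε ∈ [0, 1/2)` satisfy
`Re⟨(1-P₀)P₁O, (1-P₀)P₂O⟩ ≤ ε‖(1-P₀)O‖²`, then
`‖(1-P₀)O‖² ≤ (1-2ε)⁻¹(‖(1-P₁)O‖² + ‖(1-P₂)O‖²)`. -/
theorem factorization_of_variance
    {V : Type*} [NormedAddCommGroup V] [InnerProductSpace ℂ V] [FiniteDimensional ℂ V]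
    (P₀ P₁ P₂ : V →ₗ[ℂ] V)
    (h₀sym : ∀ x y : V, (inner ℂ (P₀ x) y : ℂ) = inner ℂ x (P₀ y))
    (h₁sym : ∀ x y : V, (inner ℂ (P₁ x) y : ℂ) = inner ℂ x (P₁ y))
    (h₂sym : ∀ x y : V, (inner ℂ (P₂ x) y : ℂ) = inner ℂ x (P₂ y))
    (h₀idem : ∀ x : V, P₀ (P₀ x) = P₀ x)
    (h₁idem : ∀ x : V, P₁ (P₁ x) = P₁ x)
    (h₂idem : ∀ x : V, P₂ (P₂ x) = P₂ x)
    (h₀₁ : ∀ x : V, P₀ (P₁ x) = P₀ x)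
    (h₀₂ : ∀ x : V, P₀ (P₂ x) = P₀ x)
    (O : V) (ε : ℝ) (hε₀ : 0 ≤ ε) (hε : ε < 1 / 2)
    (hcov : (inner ℂ (P₁ O - P₀ (P₁ O)) (P₂ O - P₀ (P₂ O)) : ℂ).re ≤ ε * ‖O - P₀ O‖ ^ 2) :
    ‖O - P₀ O‖ ^ 2 ≤ (1 - 2 * ε)⁻¹ * (‖O - P₁ O‖ ^ 2 + ‖O - P₂ O‖ ^ 2) := by
  set x := O - P₀ O with hx
  set a₁ := P₁ O - P₀ O with ha₁
  set a₂ := P₂ O - P₀ O with ha₂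
  -- orthogonality: (O - PᵢO) ⟂ aᵢ
  have orth : ∀ (P : V →ₗ[ℂ] V), (∀ x y : V, (inner ℂ (P x) y : ℂ) = inner ℂ x (P y)) →
      (∀ x : V, P (P x) = P x) → (∀ x : V, P₀ (P x) = P₀ x) →
      (inner ℂ (O - P O) (P O - P₀ O) : ℂ) = 0 := by
    intro P hsym hidem h01
    have h1 : (inner ℂ (O - P O) (P O) : ℂ) = 0 := by
      rw [← hsym]
      simp [map_sub, hidem]
    have h2 : (inner ℂ (O - P O) (P₀ O) : ℂ) = 0 := by
      rw [← h₀sym]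
      simp [map_sub, h01]
    rw [inner_sub_right, h1, h2, sub_zero]
  have o₁ := orth P₁ h₁sym h₁idem h₀₁
  have o₂ := orth P₂ h₂sym h₂idem h₀₂
  have dec₁ : x = (O - P₁ O) + a₁ := by rw [hx, ha₁]; abel
  have dec₂ : x = (O - P₂ O) + a₂ := by rw [hx, ha₂]; abel
  have E₁ : ‖x‖ ^ 2 = ‖O - P₁ O‖ ^ 2 + ‖a₁‖ ^ 2 := by
    rw [dec₁, @norm_add_sq ℂ, o₁]; simp
  have E₂ : ‖x‖ ^ 2 = ‖O - P₂ O‖ ^ 2 + ‖a₂‖ ^ 2 := by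
    rw [dec₂, @norm_add_sq ℂ, o₂]; simp
  have ip₁ : (inner ℂ x a₁ : ℂ).re = ‖a₁‖ ^ 2 := by
    rw [dec₁, inner_add_left, o₁, zero_add, inner_self_eq_norm_sq_to_K]
    norm_cast
  have ip₂ : (inner ℂ x a₂ : ℂ).re = ‖a₂‖ ^ 2 := by
    rw [dec₂, inner_add_left, o₂, zero_add, inner_self_eq_norm_sq_to_K]
    norm_cast
  have hcov' : (inner ℂ a₁ a₂ : ℂ).re ≤ ε * ‖x‖ ^ 2 := by
    rwa [h₀₁, h₀₂] at hcov
  have N : (0:ℝ) ≤ ‖x - (a₁ + a₂)‖ ^ 2 := sq_nonneg _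
  have expand : ‖x - (a₁ + a₂)‖ ^ 2 =
      ‖x‖ ^ 2 - 2 * ((inner ℂ x a₁ : ℂ).re + (inner ℂ x a₂ : ℂ).re)
        + (‖a₁‖ ^ 2 + 2 * (inner ℂ a₁ a₂ : ℂ).re + ‖a₂‖ ^ 2) := by
    rw [@norm_sub_sq ℂ, @norm_add_sq ℂ, inner_add_right]
    simp [RCLike.re]
  rw [expand, ip₁, ip₂] at N
  have hpos : (0:ℝ) < 1 - 2 * ε := by linarith
  rw [inv_mul_eq_div, le_div_iff₀ hpos]
  nlinarith [N, E₁, E₂, hcov', ip₁, ip₂]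

end
end
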